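/- Let D and D' be neighboring datasets (D = D' ∪ {t}) and let v₁, ..., v_k be the nodes of a fixed decomposition tree whose regions contain t, with biased counts satisfying b(vᵢ) = b'(vᵢ) + 1 if b(vᵢ) ≥ θ - δ + 1 and b(vᵢ) = b'(vᵢ) otherwise. Then ln( Pr[D → T] / Pr[D' → T] ) ≥ -1/λ, where Pr[D → T] = (∏_{i=1}^{k-1} Pr[b(vᵢ) + Lap(λ) > θ])·Pr[b(v_k) + Lap(λ) ≤ θ] and similarly for D' with b'. -/
import Mathlib


open Real MeasureTheory

/-- Pr[Lap(l) > t] for the Laplace distribution with scale l,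
density (1/(2l))·exp(-|y|/l). -/
noncomputable def lapTail (l t : ℝ) : ℝ :=
  ∫ y in Set.Ioi t, (1 / (2 * l)) * Real.exp (-|y| / l)

/-- Pr[Lap(l) ≤ t]. -/
noncomputable def lapCDF (l t : ℝ) : ℝ :=
  ∫ y in Set.Iic t, (1 / (2 * l)) * Real.exp (-|y| / l)

section aux

variable {l : ℝ}

private noncomputable def lapD (l y : ℝ) : ℝ := (1 / (2 * l)) * Real.exp (-|y| / l)

private lemma lapD_cont : Continuous (lapD l) := by
  unfold lapD; fun_prop

private lemma lapD_pos (hl : 0 < l) (y : ℝ) : 0 < lapD l y := by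
  unfold lapD; positivity

private lemma lapTail_eq (a : ℝ) : lapTail l a = ∫ y in Set.Ioi a, lapD l y := rfl

/-- integrability of the Laplace density on any right half-line -/
private lemma lapD_int_Ioi (hl : 0 < l) (a : ℝ) : IntegrableOn (lapD l) (Set.Ioi a) := by
  have hsplit : Set.Ioi a = Set.Ioc a (max a 0) ∪ Set.Ioi (max a 0) := by
    rw [Set.Ioc_union_Ioi_eq_Ioi (le_max_left a 0)]
  rw [hsplit]
  apply IntegrableOn.union
  · exact (lapD_cont.integrableOn_Ioc)
  · have hbase : IntegrableOn (fun y : ℝ => (1 / (2 * l)) * Real.exp (-(1 / l) * y))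
        (Set.Ioi (max a 0)) := by
      exact (exp_neg_integrableOn_Ioi (max a 0) (by positivity)).const_mul _
    apply hbase.congr_fun ?_ measurableSet_Ioi
    intro y hy
    have hy0 : 0 < y := lt_of_le_of_lt (le_max_right a 0) hy
    unfold lapD
    rw [abs_of_pos hy0]
    ring_nf

private lemma lapTail_pos (hl : 0 < l) (a : ℝ) : 0 < lapTail l a := by
  have h := (setIntegral_pos_iff_support_of_nonneg_ae
    (f := lapD l) (s := Set.Ioi a) (μ := volume)
    (Filter.Eventually.of_forall fun y => (lapD_pos hl y).le) (lapD_int_Ioi hl a)).2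
  have hsupp : Function.support (lapD l) ∩ Set.Ioi a = Set.Ioi a := by
    rw [Set.inter_eq_right]
    intro y _; exact (lapD_pos hl y).ne'
  have := h (by rw [hsupp, Real.volume_Ioi]; simp)
  simpa [lapTail, lapD] using this

private lemma lapTail_anti (hl : 0 < l) {a b : ℝ} (hab : a ≤ b) :
    lapTail l b ≤ lapTail l a := by
  rw [lapTail_eq, lapTail_eq]
  apply setIntegral_mono_set (lapD_int_Ioi hl a)
    (Filter.Eventually.of_forall fun y => (lapD_pos hl y).le)
  exact HasSubset.Subset.eventuallyLE (Set.Ioi_subset_Ioi hab)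

/-- translation for set integrals over `Ioi` -/
private lemma shift_integral (g : ℝ → ℝ) (c a : ℝ) :
    (∫ x in Set.Ioi c, g (x + a)) = ∫ x in Set.Ioi (c + a), g x := by
  have A : MeasurableEmbedding fun x : ℝ => x + a :=
    (Homeomorph.addRight a).isClosedEmbedding.measurableEmbedding
  have h := A.setIntegral_map (μ := volume) g (Set.Ioi (c + a))
  rw [map_add_right_eq_self volume a] at h
  rw [h]
  congr 1
  ext x
  simp

private lemma restrict_map_shift (a : ℝ) :
    (volume : Measure ℝ).restrict (Set.Ioi (a + 1)) =
      Measure.map (· + 1) ((volume : Measure ℝ).restrict (Set.Ioi a)) := by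
  calc (volume : Measure ℝ).restrict (Set.Ioi (a + 1))
      = (Measure.map (· + 1) (volume : Measure ℝ)).restrict (Set.Ioi (a + 1)) := by
        rw [map_add_right_eq_self]
    _ = Measure.map (· + 1) ((volume : Measure ℝ).restrict ((· + 1) ⁻¹' Set.Ioi (a + 1))) :=
        Measure.restrict_map (measurable_add_const 1) measurableSet_Ioi
    _ = Measure.map (· + 1) ((volume : Measure ℝ).restrict (Set.Ioi a)) := by
        congr 1
        ext x
        simp

private lemma lapTail_shift (hl : 0 < l) (a : ℝ) :
    Real.exp (-(1 / l)) * lapTail l a ≤ lapTail l (a + 1) := by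
  have key : ∀ y : ℝ, Real.exp (-(1 / l)) * lapD l y ≤ lapD l (y + 1) := by
    intro y
    unfold lapD
    have habs : |y + 1| ≤ |y| + 1 := (abs_add_le y 1).trans (by simp)
    calc Real.exp (-(1 / l)) * ((1 / (2 * l)) * Real.exp (-|y| / l))
        = (1 / (2 * l)) * Real.exp (-(1 / l) + -|y| / l) := by rw [Real.exp_add]; ring
      _ ≤ (1 / (2 * l)) * Real.exp (-|y + 1| / l) := by
          have hle : -(1 / l) + -|y| / l ≤ -|y + 1| / l := by
            have h2 : -(1 / l) + -|y| / l = (-1 + -|y|) / l := by ring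
            rw [h2, div_le_div_iff_of_pos_right hl]
            linarith
          exact mul_le_mul_of_nonneg_left (Real.exp_le_exp.2 hle) (by positivity)
  have htrans : lapTail l (a + 1) = ∫ y in Set.Ioi a, lapD l (y + 1) := by
    rw [lapTail_eq, shift_integral (lapD l) a 1]
  rw [htrans]
  have A : MeasurableEmbedding fun x : ℝ => x + 1 :=
    (Homeomorph.addRight (1 : ℝ)).isClosedEmbedding.measurableEmbedding
  have hint1 : IntegrableOn (fun y => lapD l (y + 1)) (Set.Ioi a) := by
    have h1 : Integrable (lapD l) ((volume : Measure ℝ).restrict (Set.Ioi (a + 1))) :=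
      lapD_int_Ioi hl (a + 1)
    rw [restrict_map_shift a, A.integrable_map_iff] at h1
    exact h1
  calc Real.exp (-(1 / l)) * lapTail l a
      = ∫ y in Set.Ioi a, Real.exp (-(1 / l)) * lapD l y := by
        rw [lapTail_eq, ← integral_const_mul]
    _ ≤ ∫ y in Set.Ioi a, lapD l (y + 1) := by
        apply setIntegral_mono_on ((lapD_int_Ioi hl a).const_mul _) hint1 measurableSet_Ioi
        intro y _; exact key y

private lemma lapCDF_eq_tail (l t : ℝ) : lapCDF l t = lapTail l (-t) := by
  unfold lapCDF lapTail
  rw [← integral_comp_neg_Iic t]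
  apply setIntegral_congr_fun measurableSet_Iic
  intro y _
  simp [abs_neg]

end aux

/-- the lower bound -1/λ on the log probability ratio along a
root-to-leaf path in PrivTree. -/
theorem stmt17 (l θ δ : ℝ) (hl : 0 < l) (k : ℕ) (hk : 1 ≤ k)
    (b b' : ℕ → ℝ)
    (hrel : ∀ i ∈ Finset.Icc 1 k,
      (θ - δ + 1 ≤ b i → b i = b' i + 1) ∧ (b i < θ - δ + 1 → b i = b' i)) :
    Real.log
        (((∏ i ∈ Finset.Icc 1 (k - 1), lapTail l (θ - b i)) * lapCDF l (θ - b k)) /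
          ((∏ i ∈ Finset.Icc 1 (k - 1), lapTail l (θ - b' i)) * lapCDF l (θ - b' k))) ≥
      -(1 / l) := by
  have hbb : ∀ i ∈ Finset.Icc 1 k, b' i ≤ b i ∧ b i ≤ b' i + 1 := by
    intro i hi
    rcases le_or_gt (θ - δ + 1) (b i) with h | h
    · rw [(hrel i hi).1 h]; constructor <;> linarith
    · rw [(hrel i hi).2 h]; constructor <;> linarith
  set A := ∏ i ∈ Finset.Icc 1 (k - 1), lapTail l (θ - b i) with hA
  set A' := ∏ i ∈ Finset.Icc 1 (k - 1), lapTail l (θ - b' i) with hA'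
  have hApos : 0 < A := Finset.prod_pos fun i _ => lapTail_pos hl _
  have hA'pos : 0 < A' := Finset.prod_pos fun i _ => lapTail_pos hl _
  have hmem : ∀ i ∈ Finset.Icc 1 (k - 1), i ∈ Finset.Icc 1 k := by
    intro i hi
    rw [Finset.mem_Icc] at hi ⊢
    exact ⟨hi.1, hi.2.trans (Nat.sub_le k 1)⟩
  have hAle : A' ≤ A := by
    apply Finset.prod_le_prod (fun i _ => (lapTail_pos hl _).le)
    intro i hi
    exact lapTail_anti hl (by linarith [(hbb i (hmem i hi)).1])
  have hkmem : k ∈ Finset.Icc 1 k := Finset.mem_Icc.2 ⟨hk, le_rfl⟩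
  have hC : Real.exp (-(1 / l)) * lapCDF l (θ - b' k) ≤ lapCDF l (θ - b k) := by
    rw [lapCDF_eq_tail, lapCDF_eq_tail, neg_sub, neg_sub]
    calc Real.exp (-(1 / l)) * lapTail l (b' k - θ)
        ≤ lapTail l (b' k - θ + 1) := lapTail_shift hl _
      _ ≤ lapTail l (b k - θ) := lapTail_anti hl (by linarith [(hbb k hkmem).2])
  have hCpos : 0 < lapCDF l (θ - b k) := by rw [lapCDF_eq_tail]; exact lapTail_pos hl _
  have hC'pos : 0 < lapCDF l (θ - b' k) := by rw [lapCDF_eq_tail]; exact lapTail_pos hl _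
  have hmain : Real.exp (-(1 / l)) * (A' * lapCDF l (θ - b' k)) ≤ A * lapCDF l (θ - b k) := by
    calc Real.exp (-(1 / l)) * (A' * lapCDF l (θ - b' k))
        = A' * (Real.exp (-(1 / l)) * lapCDF l (θ - b' k)) := by ring
      _ ≤ A * lapCDF l (θ - b k) := by
          apply mul_le_mul hAle hC (mul_nonneg (Real.exp_pos _).le hC'pos.le) hApos.le
  have hden : 0 < A' * lapCDF l (θ - b' k) := mul_pos hA'pos hC'pos
  have hratio : Real.exp (-(1 / l)) ≤
      (A * lapCDF l (θ - b k)) / (A' * lapCDF l (θ - b' k)) := by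
    rw [le_div_iff₀ hden]
    linarith
  have := Real.log_le_log (Real.exp_pos _) hratio
  rw [Real.log_exp] at this
  exact this
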